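/- The flat rank (and hence the slice rank) of a diagonal tensor of size m is m: if t : [m] × [m] × [m] → F satisfies t(i,j,k) = δ_{ij}δ_{jk}·c_i with all c_i ≠ 0, then frank(t) = slicerank(t) = m. -/

import Mathlib

/-!
Slicing along the first factor writes the diagonal tensor as `m` slices, so both ranks are at
most `m`. Conversely, slice rank bounds flat rank: a slice in the first or second factor contracts
to a matrix of rank at most one, and a slice `f z * g x y` contracts to zero on the hyperplane
`f ⬝ᵥ v = 0`, so ranks and codimensions add up along a slice decomposition. Finally, contracting
the diagonal tensor with `v` gives `diagonal (c * v)`, of rank `|supp v|`, and every subspace `V`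
contains a vector with `|supp v| ≥ dim V`; hence `r + codim V ≥ m` for every flat-rank witness.
-/

/-- `HasSliceRankLE K F r` : the tensor `F` can be written as a sum of `r` slice terms. -/
def HasSliceRankLE {X Y Z : Type*} (K : Type*) [Field K]
    (F : X → Y → Z → K) (r : ℕ) : Prop :=
  ∃ T : Fin r → (X → Y → Z → K),
    (∀ i, (∃ (f : X → K) (g : Y → Z → K), T i = fun x y z => f x * g y z) ∨
          (∃ (f : Y → K) (g : X → Z → K), T i = fun x y z => f y * g x z) ∨
          (∃ (f : Z → K) (g : X → Y → K), T i = fun x y z => f z * g x y)) ∧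
    ∀ x y z, F x y z = ∑ i, T i x y z

/-- The slice rank of a 3-tensor. -/
noncomputable def sliceRank {X Y Z : Type*} (K : Type*) [Field K]
    (F : X → Y → Z → K) : ℕ :=
  sInf {r | HasSliceRankLE K F r}

/-- Contraction of the third factor of a 3-tensor with a vector. -/
noncomputable def contractZ {K : Type*} [Field K] {X Y Z : Type*} [Fintype Z]
    (t : X → Y → Z → K) (v : Z → K) : Matrix X Y K :=
  Matrix.of fun x y => ∑ z, t x y z * v z

/-- `HasFlatRankLE K t ℓ` : there is a subspace `V` of the third factor, of
codimension `c`, with all contractions of `t` against vectors of `V` of matrix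
rank at most `r`, and `r + c ≤ ℓ`. -/
def HasFlatRankLE {X Y Z : Type*} (K : Type*) [Field K]
    [Fintype X] [Fintype Y] [Fintype Z] (t : X → Y → Z → K) (ℓ : ℕ) : Prop :=
  ∃ (V : Submodule K (Z → K)) (r : ℕ),
    (∀ v ∈ V, (contractZ t v).rank ≤ r) ∧
    r + (Fintype.card Z - Module.finrank K V) ≤ ℓ

/-- The flat rank of a 3-tensor. -/
noncomputable def flatRank {X Y Z : Type*} (K : Type*) [Field K]
    [Fintype X] [Fintype Y] [Fintype Z] (t : X → Y → Z → K) : ℕ :=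
  sInf {ℓ | HasFlatRankLE K t ℓ}


open Module

lemma Matrix.rank_add_le {K X Y : Type*} [Field K] [Fintype Y] (A B : Matrix X Y K) :
    (A + B).rank ≤ A.rank + B.rank := by
  have hrange : LinearMap.range (A + B).mulVecLin ≤
      LinearMap.range A.mulVecLin ⊔ LinearMap.range B.mulVecLin := by
    rintro w ⟨u, rfl⟩
    rw [Matrix.mulVecLin_add]
    exact Submodule.add_mem_sup ⟨u, rfl⟩ ⟨u, rfl⟩
  exact (Submodule.finrank_mono hrange).trans (Submodule.finrank_add_le_finrank_add_finrank _ _)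

/-- In a subspace of `K^ι`, a vector of inclusion-maximal support determines every other vector
of the subspace by its values on that support, so the dimension is at most the support size. -/
lemma Submodule.exists_finrank_le_card_support {K ι : Type*} [Field K] [DecidableEq K]
    [Fintype ι] (V : Submodule K (ι → K)) :
    ∃ v ∈ V, finrank K V ≤ Fintype.card {i // v i ≠ 0} := by
  obtain ⟨v, hvV, hmax⟩ :=
    Set.Finite.exists_maximalFor' Function.support (V : Set (ι → K)) (Set.toFinite _)
      ⟨0, V.zero_mem⟩
  have hvanish : ∀ w ∈ V, (∀ i, v i ≠ 0 → w i = 0) → w = 0 := by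
    intro w hwV hw
    have hsupp : Function.support v ⊆ Function.support (v + w) := fun i hi => by
      simpa [hw i hi] using hi
    funext i
    by_contra hwi
    have hvi : v i = 0 := by_contra fun hvi => hwi (hw i hvi)
    have : i ∈ Function.support (v + w) := by simpa [hvi] using hwi
    exact hmax (V.add_mem hvV hwV) hsupp this hvi
  let restrict : V →ₗ[K] ({i // v i ≠ 0} → K) := LinearMap.funLeft K K Subtype.val ∘ₗ V.subtype
  have hinj : Function.Injective restrict := by
    rw [← LinearMap.ker_eq_bot, LinearMap.ker_eq_bot']
    intro w hw
    exact Subtype.ext <| hvanish w w.2 fun i hi => congrFun hw ⟨i, hi⟩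
  refine ⟨v, hvV, ?_⟩
  simpa using LinearMap.finrank_le_finrank_of_injective hinj

section Contraction

variable {K X Y Z : Type*} [Field K] [Fintype Z]

lemma contractZ_add (s t : X → Y → Z → K) (v : Z → K) :
    contractZ (s + t) v = contractZ s v + contractZ t v := by
  ext x y
  simp [contractZ, add_mul, Finset.sum_add_distrib]

lemma contractZ_zero (v : Z → K) : contractZ (0 : X → Y → Z → K) v = 0 := by
  ext x y
  simp [contractZ]

lemma contractZ_slice₁ (f : X → K) (g : Y → Z → K) (v : Z → K) :
    contractZ (fun x y z => f x * g y z) v = Matrix.vecMulVec f fun y => ∑ z, g y z * v z := by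
  ext x y
  simp [contractZ, Matrix.vecMulVec_apply, Finset.mul_sum, mul_assoc]

lemma contractZ_slice₂ (f : Y → K) (g : X → Z → K) (v : Z → K) :
    contractZ (fun x y z => f y * g x z) v = Matrix.vecMulVec (fun x => ∑ z, g x z * v z) f := by
  ext x y
  simp only [contractZ, Matrix.of_apply, Matrix.vecMulVec_apply, Finset.sum_mul]
  exact Finset.sum_congr rfl fun z _ => by ring

lemma contractZ_slice₃ (f : Z → K) (g : X → Y → K) (v : Z → K) :
    contractZ (fun x y z => f z * g x y) v = (f ⬝ᵥ v) • Matrix.of g := by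
  ext x y
  simp only [contractZ, Matrix.of_apply, dotProduct, Matrix.smul_apply, smul_eq_mul, Finset.sum_mul]
  exact Finset.sum_congr rfl fun z _ => by ring

end Contraction

section FlatRank

variable {K X Y Z : Type*} [Field K] [Fintype X] [Fintype Y] [Fintype Z]

lemma hasFlatRankLE_zero : HasFlatRankLE K (0 : X → Y → Z → K) 0 :=
  ⟨⊤, 0, fun v _ => by simp [contractZ_zero], by simp⟩

lemma HasFlatRankLE.add {s t : X → Y → Z → K} {a b : ℕ} (hs : HasFlatRankLE K s a)
    (ht : HasFlatRankLE K t b) : HasFlatRankLE K (s + t) (a + b) := by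
  obtain ⟨V, r, hV, hr⟩ := hs
  obtain ⟨W, q, hW, hq⟩ := ht
  refine ⟨V ⊓ W, r + q, fun v hv => ?_, ?_⟩
  · rw [contractZ_add]
    exact (Matrix.rank_add_le _ _).trans (add_le_add (hV v hv.1) (hW v hv.2))
  · have hdim := Submodule.finrank_sup_add_finrank_inf_eq V W
    have hsup : finrank K ↥(V ⊔ W) ≤ Fintype.card Z := by
      simpa using (V ⊔ W).finrank_le
    omega

lemma hasFlatRankLE_sum {ι : Type*} (s : Finset ι) (T : ι → X → Y → Z → K)
    (hT : ∀ i ∈ s, HasFlatRankLE K (T i) 1) : HasFlatRankLE K (∑ i ∈ s, T i) s.card := by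
  classical
  induction s using Finset.induction with
  | empty => simpa using hasFlatRankLE_zero
  | insert i s hi ih =>
    rw [Finset.sum_insert hi, Finset.card_insert_of_notMem hi, add_comm s.card]
    exact (hT i (s.mem_insert_self i)).add (ih fun j hj => hT j (Finset.mem_insert_of_mem hj))

lemma hasFlatRankLE_one_of_rank_le_one {t : X → Y → Z → K}
    (ht : ∀ v, (contractZ t v).rank ≤ 1) : HasFlatRankLE K t 1 :=
  ⟨⊤, 1, fun v _ => ht v, by simp⟩

lemma hasFlatRankLE_slice₃ (f : Z → K) (g : X → Y → K) :
    HasFlatRankLE K (fun x y z => f z * g x y) 1 := by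
  let φ : (Z → K) →ₗ[K] K := dotProductBilin K K f
  refine ⟨LinearMap.ker φ, 0, fun v hv => ?_, ?_⟩
  · have hfv : f ⬝ᵥ v = 0 := hv
    simp [contractZ_slice₃, hfv]
  · have hdim := LinearMap.finrank_range_add_finrank_ker φ
    have hrange : finrank K (LinearMap.range φ) ≤ 1 := by
      simpa using (LinearMap.range φ).finrank_le
    simp only [finrank_fintype_fun_eq_card] at hdim
    omega

theorem HasSliceRankLE.hasFlatRankLE {t : X → Y → Z → K} {r : ℕ}
    (h : HasSliceRankLE K t r) : HasFlatRankLE K t r := by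
  obtain ⟨T, hT, hsum⟩ := h
  have ht : t = ∑ i, T i := by
    funext x y z
    simp [hsum]
  have hslice : ∀ i ∈ Finset.univ, HasFlatRankLE K (T i) 1 := by
    intro i _
    rcases hT i with ⟨f, g, hfg⟩ | ⟨f, g, hfg⟩ | ⟨f, g, hfg⟩ <;> rw [hfg]
    · exact hasFlatRankLE_one_of_rank_le_one fun v => by
        simpa [contractZ_slice₁] using Matrix.rank_vecMulVec_le _ _
    · exact hasFlatRankLE_one_of_rank_le_one fun v => by
        simpa [contractZ_slice₂] using Matrix.rank_vecMulVec_le _ _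
    · exact hasFlatRankLE_slice₃ f g
  simpa [ht] using hasFlatRankLE_sum Finset.univ T hslice

end FlatRank

lemma hasSliceRankLE_fin {K Y Z : Type*} [Field K] {n : ℕ} (t : Fin n → Y → Z → K) :
    HasSliceRankLE K t n := by
  refine ⟨fun i x y z => (if x = i then 1 else 0) * t i y z, fun i => Or.inl ⟨_, _, rfl⟩, ?_⟩
  intro x y z
  simp

def diagonalTensor {K ι : Type*} [Zero K] [DecidableEq ι] (c : ι → K) : ι → ι → ι → K :=
  fun i j k => if i = j ∧ j = k then c i else 0

lemma contractZ_diagonalTensor {K ι : Type*} [Field K] [Fintype ι] [DecidableEq ι] (c v : ι → K) :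
    contractZ (diagonalTensor c) v = Matrix.diagonal (c * v) := by
  ext i j
  by_cases hij : i = j
  · subst hij
    simp [contractZ, diagonalTensor]
  · simp [contractZ, diagonalTensor, hij]

theorem card_le_of_hasFlatRankLE_diagonalTensor {K ι : Type*} [Field K] [Fintype ι]
    [DecidableEq ι] {c : ι → K} (hc : ∀ i, c i ≠ 0) {ℓ : ℕ}
    (h : HasFlatRankLE K (diagonalTensor c) ℓ) : Fintype.card ι ≤ ℓ := by
  classical
  obtain ⟨V, r, hV, hℓ⟩ := h
  obtain ⟨v, hv, hdim⟩ := V.exists_finrank_le_card_support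
  have hrank : (contractZ (diagonalTensor c) v).rank = Fintype.card {i // v i ≠ 0} := by
    rw [contractZ_diagonalTensor, Matrix.rank_diagonal]
    simp [hc]
  have hr := hV v hv
  have hV_le : finrank K V ≤ Fintype.card ι := by simpa using V.finrank_le
  omega

/-- A diagonal tensor of size `m` with nonzero diagonal entries has flat rank
and slice rank exactly `m`. -/
theorem flatRank_sliceRank_diagonal {K : Type*} [Field K] (m : ℕ)
    (c : Fin m → K) (hc : ∀ i, c i ≠ 0) :
    flatRank K (fun i j k : Fin m => if i = j ∧ j = k then c i else 0) = m ∧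
    sliceRank K (fun i j k : Fin m => if i = j ∧ j = k then c i else 0) = m := by
  show flatRank K (diagonalTensor c) = m ∧ sliceRank K (diagonalTensor c) = m
  have hslice : HasSliceRankLE K (diagonalTensor c) m := hasSliceRankLE_fin _
  have hlower (ℓ : ℕ) (h : HasFlatRankLE K (diagonalTensor c) ℓ) : m ≤ ℓ := by
    simpa using card_le_of_hasFlatRankLE_diagonalTensor hc h
  have hflat := hslice.hasFlatRankLE
  constructor
  · exact le_antisymm (Nat.sInf_le hflat) (le_csInf ⟨m, hflat⟩ hlower)
  · exact le_antisymm (Nat.sInf_le hslice)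
      (le_csInf ⟨m, hslice⟩ fun ℓ h => hlower ℓ h.hasFlatRankLE)
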